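/- arXiv:2302.00742 — 2 statements merged into one kernel-verified Lean document; each statement's English description precedes it below -/
import Mathlib

section
/- Let P = (u, …, v) and Q be vertex-disjoint paths in a finite simple graph G such that no endpoint of Q is adjacent to an endpoint of P (i.e., d(P, Q) = 0). Then the number of edges of Q admitting an elementary merge of P into Q is at least d_Q(u) + d_Q(v) − |V(Q)| + 1. -/
/-!
Index `Q = (q₀, …, qₘ)`. Since `q₀` is not adjacent to `v` and `qₘ` is not adjacent to `u`,
`d_Q(u)` counts the indices `i < m` with `u ~ qᵢ` and `d_Q(v)` the indices `i < m` with
`v ~ qᵢ₊₁`. Two subsets of an `m`-element set meet in at least `d_Q(u) + d_Q(v) - m` elements,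
and every common index `i` is an edge `{qᵢ, qᵢ₊₁}` admitting a merge; finally `|V(Q)| = m + 1`.
-/

/-- `dOn G Q x` is the number of neighbors of `x` in `G` that lie on the walk `Q`. -/
def dOn {V : Type*} [DecidableEq V] (G : SimpleGraph V) [DecidableRel G.Adj]
    {a b : V} (Q : G.Walk a b) (x : V) : ℕ :=
  (Q.support.toFinset.filter (fun y => G.Adj x y)).card

/-- The number of edges `{qᵢ, qᵢ₊₁}` of `Q` that admit an elementary merge of a path with
endpoints `u` and `v` into `Q`, i.e. such that (`u` is adjacent to `qᵢ` and `v` to `qᵢ₊₁`)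
or (`u` is adjacent to `qᵢ₊₁` and `v` to `qᵢ`). -/
def mergeCount {V : Type*} (G : SimpleGraph V) [DecidableRel G.Adj] (u v : V)
    {a b : V} (Q : G.Walk a b) : ℕ :=
  ((Finset.range Q.length).filter (fun i =>
    (G.Adj u (Q.getVert i) ∧ G.Adj v (Q.getVert (i + 1))) ∨
    (G.Adj u (Q.getVert (i + 1)) ∧ G.Adj v (Q.getVert i)))).card

open Finset

theorem Finset.card_filter_add_card_filter_le {α : Type*} (s : Finset α) (p q : α → Prop)
    [DecidablePred p] [DecidablePred q] :
    #{x ∈ s | p x} + #{x ∈ s | q x} ≤ #{x ∈ s | p x ∧ q x} + #s := by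
  classical
  rw [filter_and, ← card_union_add_card_inter, add_comm]
  gcongr
  exact union_subset (filter_subset _ _) (filter_subset _ _)

theorem Finset.card_filter_range_succ_of_not_last (n : ℕ) (p : ℕ → Prop) [DecidablePred p]
    (hn : ¬ p n) : #{i ∈ range (n + 1) | p i} = #{i ∈ range n | p i} := by
  rw [range_add_one, filter_insert, if_neg hn]

theorem Finset.card_filter_range_succ_of_not_zero (n : ℕ) (p : ℕ → Prop) [DecidablePred p]
    (h0 : ¬ p 0) : #{i ∈ range (n + 1) | p i} = #{i ∈ range n | p (i + 1)} := by
  rw [range_add_one', filter_insert, if_neg h0, filter_map, card_map]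
  rfl

namespace SimpleGraph.Walk

variable {V : Type*} {G : SimpleGraph V} {a b : V}

theorem support_toFinset_eq_image_getVert [DecidableEq V] (Q : G.Walk a b) :
    Q.support.toFinset = (range (Q.length + 1)).image Q.getVert := by
  ext x
  simp only [List.mem_toFinset, mem_support_iff_exists_getVert, mem_image, mem_range,
    Nat.lt_succ_iff]
  exact ⟨fun ⟨i, hx, hi⟩ => ⟨i, hi, hx⟩, fun ⟨i, hi, hx⟩ => ⟨i, hx, hi⟩⟩

theorem IsPath.card_support_toFinset [DecidableEq V] {Q : G.Walk a b} (hQ : Q.IsPath) :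
    #Q.support.toFinset = Q.length + 1 := by
  rw [List.toFinset_card_of_nodup hQ.support_nodup, length_support]

theorem IsPath.card_filter_support_toFinset [DecidableEq V] {Q : G.Walk a b} (hQ : Q.IsPath)
    (p : V → Prop) [DecidablePred p] :
    #{x ∈ Q.support.toFinset | p x} = #{i ∈ range (Q.length + 1) | p (Q.getVert i)} := by
  rw [support_toFinset_eq_image_getVert, filter_image, card_image_of_injOn]
  intro i hi j hj hij
  simp only [coe_filter, mem_range, Set.mem_ofPred_eq] at hi hj
  exact hQ.getVert_injOn (Nat.lt_succ_iff.mp hi.1) (Nat.lt_succ_iff.mp hj.1) hij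

end SimpleGraph.Walk

section Merge

variable {V : Type*} {G : SimpleGraph V} [DecidableRel G.Adj] {a b : V}

theorem dOn_eq_card_filter_range_of_not_adj_end [DecidableEq V] {Q : G.Walk a b}
    (hQ : Q.IsPath) {x : V} (hxb : ¬ G.Adj x b) :
    dOn G Q x = #{i ∈ range Q.length | G.Adj x (Q.getVert i)} := by
  rw [dOn, hQ.card_filter_support_toFinset, card_filter_range_succ_of_not_last]
  rwa [Q.getVert_length]

theorem dOn_eq_card_filter_range_of_not_adj_start [DecidableEq V] {Q : G.Walk a b}
    (hQ : Q.IsPath) {x : V} (hxa : ¬ G.Adj x a) :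
    dOn G Q x = #{i ∈ range Q.length | G.Adj x (Q.getVert (i + 1))} := by
  rw [dOn, hQ.card_filter_support_toFinset, card_filter_range_succ_of_not_zero]
  rwa [Q.getVert_zero]

theorem card_filter_adj_adj_le_mergeCount (u v : V) (Q : G.Walk a b) :
    #{i ∈ range Q.length | G.Adj u (Q.getVert i) ∧ G.Adj v (Q.getVert (i + 1))}
      ≤ mergeCount G u v Q :=
  card_le_card (monotone_filter_right _ fun _ _ => Or.inl)

end Merge

theorem stmt2_general {V : Type*} [DecidableEq V] (G : SimpleGraph V) [DecidableRel G.Adj]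
    {u v a b : V} (Q : G.Walk a b)
    (hQ : Q.IsPath)
    (hav : ¬ G.Adj a v) (hbu : ¬ G.Adj b u) :
    (dOn G Q u : ℤ) + (dOn G Q v : ℤ) - (Q.support.toFinset.card : ℤ) + 1
      ≤ (mergeCount G u v Q : ℤ) := by
  have hu := dOn_eq_card_filter_range_of_not_adj_end hQ fun h => hbu h.symm
  have hv := dOn_eq_card_filter_range_of_not_adj_start hQ fun h => hav h.symm
  have hsize := hQ.card_support_toFinset
  have hcommon := card_filter_add_card_filter_le (range Q.length)
    (fun i => G.Adj u (Q.getVert i)) (fun i => G.Adj v (Q.getVert (i + 1)))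
  have hmerge := card_filter_adj_adj_le_mergeCount u v Q
  rw [card_range] at hcommon
  omega

/-- If `P = (u, …, v)` and `Q = (a, …, b)` are vertex-disjoint paths and no endpoint of `Q`
is adjacent to an endpoint of `P`, then the number of edges of `Q` admitting an elementary
merge of `P` into `Q` is at least `d_Q(u) + d_Q(v) − |V(Q)| + 1`. -/
theorem stmt2 {V : Type*} [DecidableEq V] (G : SimpleGraph V) [DecidableRel G.Adj]
    {u v a b : V} (P : G.Walk u v) (Q : G.Walk a b)
    (hP : P.IsPath) (hQ : Q.IsPath)
    (hdisj : ∀ x ∈ P.support, x ∉ Q.support)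
    (hau : ¬ G.Adj a u) (hav : ¬ G.Adj a v) (hbu : ¬ G.Adj b u) (hbv : ¬ G.Adj b v) :
    (dOn G Q u : ℤ) + (dOn G Q v : ℤ) - (Q.support.toFinset.card : ℤ) + 1
      ≤ (mergeCount G u v Q : ℤ) :=
  stmt2_general G Q hQ hav hbu
end

section
/- Let P = (u, …, v) and Q be vertex-disjoint paths in a finite simple graph G, each having at least 2 vertices. Then M(P, Q) ≥ d_Q(u) + d_Q(v) − |V(Q)| + 1. -/
/-- `d(P, Q)`: the number of endpoints of `Q` (a walk from `a` to `b`) that are adjacent to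
some endpoint of a path with endpoints `u` and `v`. -/
def dEnds {V : Type*} [DecidableEq V] (G : SimpleGraph V) [DecidableRel G.Adj]
    (u v a b : V) : ℕ :=
  (({a, b} : Finset V).filter (fun x => G.Adj x u ∨ G.Adj x v)).card

/-- `M(P, Q)`: the number of edges of `Q` admitting an elementary merge of `P` into `Q`,
plus `d(P, Q)`. -/
def MPQ {V : Type*} [DecidableEq V] (G : SimpleGraph V) [DecidableRel G.Adj] (u v : V)
    {a b : V} (Q : G.Walk a b) : ℕ :=
  mergeCount G u v Q + dEnds G u v a b

/-!
Write `Q = (q₀, …, qₙ)`. For each edge `{qᵢ, qᵢ₊₁}`, if `u ∼ qᵢ` and `v ∼ qᵢ₊₁` then the edge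
admits a merge, so `[u ∼ qᵢ] + [v ∼ qᵢ₊₁] ≤ 1 + [edge i admits a merge]`. Summing over the
`n` edges counts every neighbour of `u` on `Q` except possibly `qₙ = b` and every neighbour
of `v` except possibly `q₀ = a`; these two leftovers are bounded by `d(P, Q)`. Hence
`d_Q(u) + d_Q(v) ≤ n + M(P, Q)` with `n = |V(Q)| - 1`.
-/

open Finset

lemma Finset.card_filter_range_succ (p : ℕ → Prop) [DecidablePred p] (n : ℕ) :
    #{i ∈ range (n + 1) | p i} = #{i ∈ range n | p i} + if p n then 1 else 0 := by
  simp only [card_filter, sum_range_succ]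

lemma Finset.card_filter_range_succ' (p : ℕ → Prop) [DecidablePred p] (n : ℕ) :
    #{i ∈ range (n + 1) | p i} = #{i ∈ range n | p (i + 1)} + if p 0 then 1 else 0 := by
  simp only [card_filter, sum_range_succ']

namespace SimpleGraph

variable {V : Type*} (G : SimpleGraph V) [DecidableRel G.Adj]

lemma dOn_le_card_filter_range [DecidableEq V] {a b : V} (Q : G.Walk a b) (x : V) :
    dOn G Q x ≤ #{i ∈ range (Q.length + 1) | G.Adj x (Q.getVert i)} := by
  apply card_le_card_of_surjOn Q.getVert
  intro y hy
  simp only [coe_filter, Set.mem_ofPred_eq, List.mem_toFinset] at hy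
  obtain ⟨n, rfl, hn⟩ := Walk.mem_support_iff_exists_getVert.mp hy.1
  exact ⟨n, by simpa [Nat.lt_succ_iff] using ⟨hn, hy.2⟩, rfl⟩

lemma card_filter_adj_add_card_filter_adj_le_length_add_mergeCount (u v : V) {a b : V}
    (Q : G.Walk a b) :
    #{i ∈ range Q.length | G.Adj u (Q.getVert i)} +
        #{i ∈ range Q.length | G.Adj v (Q.getVert (i + 1))} ≤
      Q.length + mergeCount G u v Q := by
  rw [← card_union_add_card_inter]
  gcongr
  · exact (card_le_card (union_subset (filter_subset ..) (filter_subset ..))).trans_eq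
      (card_range _)
  · refine card_le_card fun i hi => ?_
    simp only [mem_inter, mem_filter] at hi ⊢
    exact ⟨hi.1.1, .inl ⟨hi.1.2, hi.2.2⟩⟩

lemma ite_adj_add_ite_adj_le_dEnds [DecidableEq V] (u v : V) {a b : V} (hab : a ≠ b) :
    (if G.Adj u b then 1 else 0) + (if G.Adj v a then 1 else 0) ≤ dEnds G u v a b := by
  rw [dEnds, card_filter, sum_pair hab, add_comm]
  gcongr <;> split_ifs <;> simp_all [G.adj_comm]

end SimpleGraph

theorem stmt3_general {V : Type*} [DecidableEq V] (G : SimpleGraph V) [DecidableRel G.Adj]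
    {u v a b : V} (Q : G.Walk a b)
    (hQ : Q.IsPath) (hQlen : 2 ≤ Q.support.toFinset.card) :
    (dOn G Q u : ℤ) + (dOn G Q v : ℤ) - (Q.support.toFinset.card : ℤ) + 1
      ≤ (MPQ G u v Q : ℤ) := by
  have hcard : Q.support.toFinset.card = Q.length + 1 := by
    rw [List.toFinset_card_of_nodup hQ.support_nodup, Q.length_support]
  have hab : a ≠ b := by
    rintro rfl
    simp [(SimpleGraph.Walk.isPath_iff_nil.mp hQ).eq_nil] at hQlen
  have hu := G.dOn_le_card_filter_range Q u
  have hv := G.dOn_le_card_filter_range Q v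
  rw [card_filter_range_succ, Q.getVert_length] at hu
  rw [card_filter_range_succ', Q.getVert_zero] at hv
  have hmerge := G.card_filter_adj_add_card_filter_adj_le_length_add_mergeCount u v Q
  have hends := G.ite_adj_add_ite_adj_le_dEnds u v hab
  rw [MPQ, hcard]
  omega

/-- If `P = (u, …, v)` and `Q = (a, …, b)` are vertex-disjoint paths, each with at least two
vertices, then `M(P, Q) ≥ d_Q(u) + d_Q(v) − |V(Q)| + 1`. -/
theorem stmt3 {V : Type*} [DecidableEq V] (G : SimpleGraph V) [DecidableRel G.Adj]
    {u v a b : V} (P : G.Walk u v) (Q : G.Walk a b)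
    (hP : P.IsPath) (hQ : Q.IsPath)
    (hPlen : 2 ≤ P.support.toFinset.card) (hQlen : 2 ≤ Q.support.toFinset.card)
    (hdisj : ∀ x ∈ P.support, x ∉ Q.support) :
    (dOn G Q u : ℤ) + (dOn G Q v : ℤ) - (Q.support.toFinset.card : ℤ) + 1
      ≤ (MPQ G u v Q : ℤ) :=
  stmt3_general G Q hQ hQlen
end
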